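/- arXiv:1905.05465 — 3 statements merged into one kernel-verified Lean document; each statement's English description precedes it below -/
import Mathlib

section
/- Let K ∈ ℝ, N ∈ (1,∞), 0 < D ≤ D_{K,N}, and let h be an MCP(K,N) density with support equal to [0,D]. Then at every point x ∈ (0,D) where h is differentiable and h(x) > 0, one has −(N−1)·(s_{K/(N−1)}'(D−x)/s_{K/(N−1)}(D−x)) ≤ h'(x)/h(x) ≤ (N−1)·(s_{K/(N−1)}'(x)/s_{K/(N−1)}(x)). -/
open MeasureTheory Filter

/-- The function `s_κ` from the paper. -/
noncomputable def sKappa (κ θ : ℝ) : ℝ :=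
  if 0 < κ then Real.sin (Real.sqrt κ * θ) / Real.sqrt κ
  else if κ < 0 then Real.sinh (Real.sqrt (-κ) * θ) / Real.sqrt (-κ)
  else θ

/-- The support of the measure `h · 𝓛¹`. -/
noncomputable def measSupport (h : ℝ → ℝ) : Set ℝ :=
  {x : ℝ | ∀ ε > 0,
    0 < (MeasureTheory.volume.withDensity (fun y => ENNReal.ofReal (h y))) (Metric.ball x ε)}

/-- A one-dimensional `MCP(K,N)` density. -/
def IsMCPDensity (K N : ℝ) (h : ℝ → ℝ) : Prop :=
  (∀ x, 0 ≤ h x) ∧ MeasureTheory.LocallyIntegrable h MeasureTheory.volume ∧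
  ∀ x₀ ∈ measSupport h, ∀ x₁ ∈ measSupport h,
    (0 < K → x₀ ≠ x₁ → |x₁ - x₀| < Real.pi / Real.sqrt (K / (N - 1))) ∧
    ∀ t ∈ Set.Icc (0:ℝ) 1,
      (sKappa (K / (N - 1)) ((1 - t) * |x₁ - x₀|) / sKappa (K / (N - 1)) |x₁ - x₀|) ^ (N - 1)
          * h x₀
        ≤ h (t * x₁ + (1 - t) * x₀)

/-- The model density `h_{K,N,D}`. -/
noncomputable def modelDensity (K N D : ℝ) (x : ℝ) : ℝ :=
  if x ∈ Set.Icc 0 (D / 2) then sKappa (K / (N - 1)) (D - x) ^ (N - 1)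
  else if x ∈ Set.Icc (D / 2) D then sKappa (K / (N - 1)) x ^ (N - 1)
  else 0

/-- Locally Lipschitz functions on a subset `I` of the reals. -/
def LocLipschitzOn (f : ℝ → ℝ) (I : Set ℝ) : Prop :=
  ∀ x ∈ I, ∃ ε > 0, ∃ C : NNReal, LipschitzOnWith C f (I ∩ Metric.ball x ε)

/-- The local Lipschitz slope `|∇f|(x)` relative to `I`. -/
noncomputable def slopeOn (f : ℝ → ℝ) (I : Set ℝ) (x : ℝ) : ℝ :=
  Filter.limsup (fun y => |f y - f x| / |y - x|) (nhdsWithin x (I \ {x}))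

/-- The Poincaré constant `λ[h, I]` of the density `h` on `I`. -/
noncomputable def poincareConst (h : ℝ → ℝ) (I : Set ℝ) : ℝ :=
  sInf { r : ℝ | ∃ f : ℝ → ℝ, LocLipschitzOn f I ∧
    (∫ x in I, f x * h x) = 0 ∧
    (0 < ∫ x in I, (f x) ^ 2 * h x) ∧
    MeasureTheory.IntegrableOn (fun x => (f x) ^ 2 * h x) I ∧
    r = (∫ x in I, (slopeOn f I x) ^ 2 * h x) / (∫ x in I, (f x) ^ 2 * h x) }

noncomputable def sKappaD (κ θ : ℝ) : ℝ :=
  if 0 < κ then Real.cos (Real.sqrt κ * θ)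
  else if κ < 0 then Real.cosh (Real.sqrt (-κ) * θ)
  else 1

lemma hasDerivAt_sKappa (κ θ : ℝ) : HasDerivAt (sKappa κ) (sKappaD κ θ) θ := by
  rcases lt_trichotomy κ 0 with hκ | hκ | hκ
  · have hs : (0:ℝ) < Real.sqrt (-κ) := Real.sqrt_pos.mpr (by linarith)
    have hfun : sKappa κ = fun θ => Real.sinh (Real.sqrt (-κ) * θ) / Real.sqrt (-κ) := by
      funext t; simp [sKappa, hκ, not_lt.mpr hκ.le]
    have hinner : HasDerivAt (fun t : ℝ => Real.sqrt (-κ) * t) (Real.sqrt (-κ)) θ := by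
      simpa using (hasDerivAt_id θ).const_mul (Real.sqrt (-κ))
    have := ((Real.hasDerivAt_sinh (Real.sqrt (-κ) * θ)).comp θ hinner).div_const (Real.sqrt (-κ))
    rw [hfun]
    simp only [sKappaD, if_neg (not_lt.mpr hκ.le), if_pos hκ]
    exact this.congr_deriv (mul_div_cancel_right₀ _ hs.ne')
  · subst hκ
    have hfun : sKappa 0 = fun θ : ℝ => θ := by funext t; simp [sKappa]
    rw [hfun]
    simpa [sKappaD] using hasDerivAt_id' θ
  · have hs : (0:ℝ) < Real.sqrt κ := Real.sqrt_pos.mpr hκ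
    have hfun : sKappa κ = fun θ => Real.sin (Real.sqrt κ * θ) / Real.sqrt κ := by
      funext t; simp [sKappa, hκ]
    have hinner : HasDerivAt (fun t : ℝ => Real.sqrt κ * t) (Real.sqrt κ) θ := by
      simpa using (hasDerivAt_id θ).const_mul (Real.sqrt κ)
    have := ((Real.hasDerivAt_sin (Real.sqrt κ * θ)).comp θ hinner).div_const (Real.sqrt κ)
    rw [hfun]
    simp only [sKappaD, if_pos hκ]
    exact this.congr_deriv (mul_div_cancel_right₀ _ hs.ne')

lemma sKappa_pos {κ r : ℝ} (hr : 0 < r) (hbd : 0 < κ → r < Real.pi / Real.sqrt κ) :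
    0 < sKappa κ r := by
  rcases lt_trichotomy κ 0 with hκ | hκ | hκ
  · have hs : (0:ℝ) < Real.sqrt (-κ) := Real.sqrt_pos.mpr (by linarith)
    simp only [sKappa, if_neg (not_lt.mpr hκ.le), if_pos hκ]
    exact div_pos (Real.sinh_pos_iff.mpr (by positivity)) hs
  · simpa [sKappa, hκ] using hr
  · have hs : (0:ℝ) < Real.sqrt κ := Real.sqrt_pos.mpr hκ
    simp only [sKappa, if_pos hκ]
    refine div_pos (Real.sin_pos_of_pos_of_lt_pi (by positivity) ?_) hs
    calc Real.sqrt κ * r < Real.sqrt κ * (Real.pi / Real.sqrt κ) := by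
          exact (mul_lt_mul_iff_right₀ hs).mpr (hbd hκ)
      _ = Real.pi := by field_simp

lemma key_slope {g φ : ℝ → ℝ} {g' φ' : ℝ} (hg : HasDerivAt g g' 0)
    (hφ : HasDerivAt φ φ' 0) (h0 : φ 0 = g 0)
    (hle : ∀ t ∈ Set.Ioc (0:ℝ) 1, φ t ≤ g t) : φ' ≤ g' := by
  have hψ : HasDerivAt (fun t => g t - φ t) (g' - φ') 0 := hg.sub hφ
  have h2 := (hψ.hasDerivWithinAt (s := Set.Ioi 0))
  rw [hasDerivWithinAt_iff_tendsto_slope] at h2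
  have hIoi : Set.Ioi (0:ℝ) \ {0} = Set.Ioi 0 := by
    apply Set.diff_singleton_eq_self; simp
  rw [hIoi] at h2
  have hev : ∀ᶠ t in nhdsWithin (0:ℝ) (Set.Ioi 0),
      0 ≤ slope (fun t => g t - φ t) 0 t := by
    filter_upwards [Ioc_mem_nhdsGT_of_mem (Set.left_mem_Ico.mpr one_pos)] with t ht
    have h1 := hle t ht
    rw [slope_def_field]
    have h0' : g 0 - φ 0 = 0 := by linarith [h0]
    rw [h0', sub_zero, sub_zero]
    exact div_nonneg (by linarith) ht.1.le
  have := ge_of_tendsto h2 hev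
  linarith

lemma deriv_bound (κ N : ℝ) {h : ℝ → ℝ} {x r H' : ℝ}
    (hc : 0 < sKappa κ |r|)
    (hdiff : HasDerivAt h H' x)
    (hle : ∀ t ∈ Set.Icc (0:ℝ) 1,
      (sKappa κ ((1 - t) * |r|) / sKappa κ |r|) ^ (N - 1) * h x ≤ h (x + t * r)) :
    -(sKappaD κ |r| / sKappa κ |r| * (N - 1) * |r| * h x) ≤ H' * r := by
  set c := sKappa κ |r| with hc'
  -- g
  have hinner : HasDerivAt (fun t : ℝ => x + t * r) r 0 := by
    simpa using ((hasDerivAt_id (0:ℝ)).mul_const r).const_add x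
  have hg : HasDerivAt (fun t : ℝ => h (x + t * r)) (H' * r) 0 := by
    have := HasDerivAt.comp 0 (by simpa using hdiff) hinner
    simpa [Function.comp_def] using this
  -- φ
  have hinner2 : HasDerivAt (fun t : ℝ => (1 - t) * |r|) (-|r|) 0 := by
    have : HasDerivAt (fun t : ℝ => (1 - t)) (-1) 0 := by
      simpa using (hasDerivAt_id (0:ℝ)).const_sub 1
    simpa using this.mul_const |r|
  have hu : HasDerivAt (fun t : ℝ => sKappa κ ((1 - t) * |r|)) (sKappaD κ |r| * -|r|) 0 := by
    have := HasDerivAt.comp 0 (by simpa using hasDerivAt_sKappa κ |r|) hinner2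
    simpa [Function.comp_def] using this
  have hv : HasDerivAt (fun t : ℝ => sKappa κ ((1 - t) * |r|) / c) (sKappaD κ |r| * -|r| / c) 0 :=
    hu.div_const c
  have hv0 : sKappa κ ((1 - (0:ℝ)) * |r|) / c = 1 := by
    norm_num [div_self hc.ne']
    rw [← hc', div_self hc.ne']
  have hφ : HasDerivAt (fun t : ℝ => (sKappa κ ((1 - t) * |r|) / c) ^ (N - 1) * h x)
      (sKappaD κ |r| * -|r| / c * (N - 1) * h x) 0 := by
    have := (hv.rpow_const (p := N - 1) (Or.inl (by simp only [hv0]; norm_num))).mul_const (h x)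
    simp only [hv0, Real.one_rpow, mul_one] at this
    exact this
  have key := key_slope hg hφ (by simp only [hv0, Real.one_rpow, one_mul]; norm_num)
    (fun t ht => hle t ⟨ht.1.le, ht.2⟩)
  have : sKappaD κ |r| * -|r| / c * (N - 1) * h x
      = -(sKappaD κ |r| / c * (N - 1) * |r| * h x) := by ring
  linarith [key]

/-- Logarithmic derivative bounds for `MCP(K,N)` densities (Corollary 4.6). -/
theorem stmt_5 (K N D : ℝ) (hN : 1 < N) (hD : 0 < D)
    (hDKN : 0 < K → D ≤ Real.pi / Real.sqrt (K / (N - 1)))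
    (h : ℝ → ℝ) (hMCP : IsMCPDensity K N h)
    (hsupp : measSupport h = Set.Icc 0 D)
    (x : ℝ) (hx : x ∈ Set.Ioo 0 D)
    (hdiff : DifferentiableAt ℝ h x) (hpos : 0 < h x) :
    -((N - 1) * (deriv (sKappa (K / (N - 1))) (D - x) / sKappa (K / (N - 1)) (D - x)))
        ≤ deriv h x / h x ∧
    deriv h x / h x
        ≤ (N - 1) * (deriv (sKappa (K / (N - 1))) x / sKappa (K / (N - 1)) x) := by
  set κ := K / (N - 1) with hκdef
  have hN1 : (0:ℝ) < N - 1 := by linarith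
  have hKκ : 0 < κ → 0 < K := by
    intro hκ
    have hKeq : K = κ * (N - 1) := by rw [hκdef, div_mul_cancel₀ K hN1.ne']
    nlinarith
  have hxm : x ∈ measSupport h := by
    rw [hsupp]; exact ⟨hx.1.le, hx.2.le⟩
  have h0m : (0:ℝ) ∈ measSupport h := by
    rw [hsupp]; exact ⟨le_refl 0, hD.le⟩
  have hDm : D ∈ measSupport h := by
    rw [hsupp]; exact ⟨hD.le, le_refl D⟩
  have hhd : HasDerivAt h (deriv h x) x := hdiff.hasDerivAt
  constructor
  · -- lower bound, using x₁ = D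
    have hr : 0 < D - x := by linarith [hx.2]
    have habs : |D - x| = D - x := abs_of_pos hr
    have hc : 0 < sKappa κ |D - x| := by
      rw [habs]
      exact sKappa_pos hr (fun hκ => lt_of_lt_of_le (by linarith [hx.1]) (hDKN (hKκ hκ)))
    have hle : ∀ t ∈ Set.Icc (0:ℝ) 1,
        (sKappa κ ((1 - t) * |D - x|) / sKappa κ |D - x|) ^ (N - 1) * h x
          ≤ h (x + t * (D - x)) := by
      intro t ht
      have := (hMCP.2.2 x hxm D hDm).2 t ht
      rwa [show t * D + (1 - t) * x = x + t * (D - x) by ring] at this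
    have A := deriv_bound κ N hc hhd hle
    rw [habs] at A
    have hder : deriv (sKappa κ) (D - x) = sKappaD κ (D - x) :=
      (hasDerivAt_sKappa κ (D - x)).deriv
    rw [hder]
    rw [habs] at hc
    rw [le_div_iff₀ hpos]
    have A' : (-(sKappaD κ (D - x) / sKappa κ (D - x) * (N - 1) * h x)) * (D - x)
        ≤ deriv h x * (D - x) := by nlinarith [A]
    have := le_of_mul_le_mul_right A' hr
    linarith
  · -- upper bound, using x₁ = 0
    have hr : 0 < x := hx.1
    have habs : |(0:ℝ) - x| = x := by simp [abs_of_pos hr]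
    have hc : 0 < sKappa κ |(0:ℝ) - x| := by
      rw [habs]
      exact sKappa_pos hr (fun hκ => lt_of_lt_of_le hx.2 (hDKN (hKκ hκ)))
    have hle : ∀ t ∈ Set.Icc (0:ℝ) 1,
        (sKappa κ ((1 - t) * |(0:ℝ) - x|) / sKappa κ |(0:ℝ) - x|) ^ (N - 1) * h x
          ≤ h (x + t * (0 - x)) := by
      intro t ht
      have := (hMCP.2.2 x hxm 0 h0m).2 t ht
      rwa [show t * 0 + (1 - t) * x = x + t * (0 - x) by ring] at this
    have A := deriv_bound κ N hc hhd hle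
    rw [habs] at A
    have hder : deriv (sKappa κ) x = sKappaD κ x := (hasDerivAt_sKappa κ x).deriv
    rw [hder]
    rw [habs] at hc
    rw [div_le_iff₀ hpos]
    have A' : deriv h x * x ≤ (sKappaD κ x / sKappa κ x * (N - 1) * h x) * x := by
      nlinarith [A]
    have := le_of_mul_le_mul_right A' hr
    linarith
end

section
/- (Muckenhoupt's criterion.) Let Ψ be a smooth positive density on a compact interval I = [a,b] ⊂ ℝ, let Λ^{D,N}(Ψ,I) denote the largest constant λ ≥ 0 such that λ·∫_a^b f² Ψ dx ≤ ∫_a^b |f'|² Ψ dx for every Lipschitz function f : [a,b] → ℝ with f(a) = 0, and set A[Ψ,I] := sup_{x∈[a,b]} (∫_a^x dt/Ψ(t)) · (∫_x^b Ψ(t) dt). Then A[Ψ,I] ≤ 1/Λ^{D,N}(Ψ,I) ≤ 4·A[Ψ,I]. -/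
open MeasureTheory Filter

open Set



lemma abs_deriv_le_of_lipschitz {F : ℝ → ℝ} {C : NNReal} (hF : LipschitzWith C F) (x : ℝ) :
    |deriv F x| ≤ C := by
  by_cases h : DifferentiableAt ℝ F x
  · have hs : Tendsto (slope F x) (nhdsWithin x {x}ᶜ) (nhds (deriv F x)) :=
      hasDerivAt_iff_tendsto_slope.1 h.hasDerivAt
    have : Tendsto (fun y => |slope F x y|) (nhdsWithin x {x}ᶜ) (nhds |deriv F x|) :=
      hs.abs
    refine le_of_tendsto this ?_
    filter_upwards [self_mem_nhdsWithin] with y hy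
    have hyx : y ≠ x := hy
    rw [slope_def_field]
    have := hF.dist_le_mul y x
    rw [Real.dist_eq, Real.dist_eq] at this
    rw [abs_div, div_le_iff₀ (abs_pos.2 (sub_ne_zero.2 hyx))]
    simpa using this
  · simp [deriv_zero_of_not_differentiableAt h, NNReal.coe_nonneg]

lemma monotone_setIntegral_deriv_le {g : ℝ → ℝ} (hg : Monotone g) (hc : Continuous g)
    {x y : ℝ} (hxy : x ≤ y) :
    ∫ t in Set.Ioc x y, deriv g t ≤ g y - g x := by
  have hae := hg.ae_hasDerivAt
  set μ := hg.stieltjesFunction.measure with hμ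
  have hderiv : (fun t => deriv g t) =ᵐ[volume]
      fun t => (μ.rnDeriv volume t).toReal := by
    filter_upwards [hae] with t ht using ht.deriv
  have hst : ∀ z, hg.stieltjesFunction z = g z := by
    intro z
    rw [hg.stieltjesFunction_eq]
    exact rightLim_eq_of_tendsto
      ((hc.tendsto z).mono_left nhdsWithin_le_nhds)
  have hfin : μ (Set.Ioc x y) ≠ ⊤ := by
    rw [hμ, StieltjesFunction.measure_Ioc]
    exact ENNReal.ofReal_ne_top
  calc ∫ t in Set.Ioc x y, deriv g t
      = ∫ t in Set.Ioc x y, (μ.rnDeriv volume t).toReal :=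
        setIntegral_congr_ae measurableSet_Ioc (hderiv.mono fun t ht => fun _ => ht)
    _ ≤ (μ (Set.Ioc x y)).toReal := Measure.setIntegral_toReal_rnDeriv_le hfin
    _ = g y - g x := by
        rw [hμ, StieltjesFunction.measure_Ioc, ENNReal.toReal_ofReal]
        · rw [hst, hst]
        · rw [hst, hst]; exact sub_nonneg.2 (hg hxy)

lemma lipschitz_setIntegral_deriv {F : ℝ → ℝ} {C : NNReal} (hF : LipschitzWith C F)
    {x y : ℝ} (hxy : x ≤ y) :
    ∫ t in Set.Ioc x y, deriv F t = F y - F x := by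
  have hFc : Continuous F := hF.continuous
  -- g₁ = C t - F t, g₂ = C t + F t are monotone
  have key : ∀ s : ℝ, s = 1 ∨ s = -1 →
      ∫ t in Set.Ioc x y, (C : ℝ) + s * deriv F t ≤ (C : ℝ) * (y - x) + s * (F y - F x) := by
    intro s hs
    set g : ℝ → ℝ := fun t => (C : ℝ) * t + s * F t with hgdef
    have hgmono : Monotone g := by
      intro u v huv
      have := hF.dist_le_mul u v
      rw [Real.dist_eq, Real.dist_eq] at this
      have habs : |F u - F v| ≤ (C : ℝ) * (v - u) := by
        calc |F u - F v| ≤ (C : ℝ) * |u - v| := this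
          _ = (C : ℝ) * (v - u) := by rw [abs_sub_comm, abs_of_nonneg (by linarith)]
      have hs1 : |s| = 1 := by rcases hs with h | h <;> simp [h]
      have : |s * (F u - F v)| ≤ (C : ℝ) * (v - u) := by rw [abs_mul, hs1, one_mul]; exact habs
      have := (abs_le.1 this).2
      simp only [hgdef]
      nlinarith [this]
    have hgc : Continuous g := by continuity
    have hgd : ∀ᵐ t, deriv g t = (C : ℝ) + s * deriv F t := by
      filter_upwards [hF.ae_differentiableAt] with t ht
      have h1 : HasDerivAt (fun u => (C : ℝ) * u) (C : ℝ) t := by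
        simpa using (hasDerivAt_id t).const_mul (C : ℝ)
      have h2 : HasDerivAt (fun u => s * F u) (s * deriv F t) t :=
        ht.hasDerivAt.const_mul s
      exact (h1.add h2).deriv
    have := monotone_setIntegral_deriv_le hgmono hgc hxy
    calc ∫ t in Set.Ioc x y, (C : ℝ) + s * deriv F t
        = ∫ t in Set.Ioc x y, deriv g t :=
          setIntegral_congr_ae measurableSet_Ioc (hgd.mono fun t ht => fun _ => ht.symm)
      _ ≤ g y - g x := this
      _ = (C : ℝ) * (y - x) + s * (F y - F x) := by simp only [hgdef]; ring
  have hint : IntegrableOn (fun t => deriv F t) (Set.Ioc x y) volume := by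
    refine Integrable.mono' (integrable_const (C : ℝ)) ?_ ?_
    · exact (measurable_deriv F).aestronglyMeasurable
    · exact Eventually.of_forall fun t => by
        simpa [Real.norm_eq_abs] using abs_deriv_le_of_lipschitz hF t
  have hvol : (volume (Set.Ioc x y)).toReal = y - x := by
    rw [Real.volume_Ioc, ENNReal.toReal_ofReal (by linarith)]
  have hconst : ∀ s : ℝ, ∫ t in Set.Ioc x y, ((C : ℝ) + s * deriv F t) =
      (C : ℝ) * (y - x) + s * ∫ t in Set.Ioc x y, deriv F t := by
    intro s
    rw [integral_add (integrable_const _) (hint.const_mul s), setIntegral_const, measureReal_def,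
      integral_const_mul, hvol, smul_eq_mul, mul_comm]
  have k1 := key 1 (Or.inl rfl)
  have k2 := key (-1) (Or.inr rfl)
  rw [hconst 1] at k1
  rw [hconst (-1)] at k2
  linarith

lemma integral_cauchy_schwarz {μ : Measure ℝ} {u v : ℝ → ℝ}
    (hu : 0 ≤ᵐ[μ] u) (hv : 0 ≤ᵐ[μ] v)
    (hu2 : MemLp u 2 μ) (hv2 : MemLp v 2 μ) :
    (∫ t, u t * v t ∂μ) ^ 2 ≤ (∫ t, u t ^ 2 ∂μ) * ∫ t, v t ^ 2 ∂μ := by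
  have hpq : Real.HolderConjugate 2 2 := Real.HolderConjugate.two_two
  have h2 : (ENNReal.ofReal (2:ℝ)) = 2 := by norm_num [ENNReal.ofReal_ofNat]
  have := integral_mul_le_Lp_mul_Lq_of_nonneg hpq hu hv (h2 ▸ hu2) (h2 ▸ hv2)
  have heq : ∀ w : ℝ → ℝ, (0 ≤ᵐ[μ] w) → (∫ t, w t ^ (2:ℝ) ∂μ) = ∫ t, w t ^ 2 ∂μ := by
    intro w hw
    refine integral_congr_ae ?_
    filter_upwards [hw] with t ht
    rw [← Real.rpow_natCast (w t) 2]
    norm_num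
  rw [heq u hu, heq v hv] at this
  have hI1 : (0:ℝ) ≤ ∫ t, u t ^ 2 ∂μ := integral_nonneg fun t => sq_nonneg _
  have hI2 : (0:ℝ) ≤ ∫ t, v t ^ 2 ∂μ := integral_nonneg fun t => sq_nonneg _
  have hb : (0:ℝ) ≤ (∫ t, u t ^ 2 ∂μ) ^ (1/(2:ℝ)) * (∫ t, v t ^ 2 ∂μ) ^ (1/(2:ℝ)) :=
    mul_nonneg (Real.rpow_nonneg hI1 _) (Real.rpow_nonneg hI2 _)
  have hjoint : (0:ℝ) ≤ ∫ t, u t * v t ∂μ :=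
    integral_nonneg_of_ae ((hu.and hv).mono fun t ht => mul_nonneg ht.1 ht.2)
  calc (∫ t, u t * v t ∂μ) ^ 2 ≤ ((∫ t, u t ^ 2 ∂μ) ^ (1/(2:ℝ)) * (∫ t, v t ^ 2 ∂μ) ^ (1/(2:ℝ))) ^ 2 :=
        pow_le_pow_left₀ hjoint this 2
    _ = (∫ t, u t ^ 2 ∂μ) * ∫ t, v t ^ 2 ∂μ := by
        rw [mul_pow, ← Real.rpow_natCast ((∫ t, u t ^ 2 ∂μ) ^ (1/(2:ℝ))) 2,
          ← Real.rpow_natCast ((∫ t, v t ^ 2 ∂μ) ^ (1/(2:ℝ))) 2,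
          ← Real.rpow_mul hI1, ← Real.rpow_mul hI2]
        norm_num

set_option maxHeartbeats 2000000 in
lemma muckenhoupt_hard (a b : ℝ) (hab : a < b) (Ψ' : ℝ → ℝ) (hΨ'c : Continuous Ψ')
    (m M : ℝ) (hm : 0 < m) (hlb : ∀ x, m ≤ Ψ' x) (hub : ∀ x, Ψ' x ≤ M)
    (A : ℝ) (hA0 : 0 < A)
    (hA : ∀ x ∈ Set.Icc a b, (∫ t in a..x, (Ψ' t)⁻¹) * (∫ t in x..b, Ψ' t) ≤ A)
    (F : ℝ → ℝ) (C : NNReal) (hF : LipschitzWith C F) (hFa : F a = 0) :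
    ∫ x in Set.Ioc a b, F x ^ 2 * Ψ' x ≤ 4 * A * ∫ x in Set.Ioc a b, (deriv F x) ^ 2 * Ψ' x := by
  have hΨ'pos : ∀ x, 0 < Ψ' x := fun x => lt_of_lt_of_le hm (hlb x)
  have hM : 0 < M := lt_of_lt_of_le (hΨ'pos a) (hub a)
  have hψinv_c : Continuous fun t => (Ψ' t)⁻¹ := hΨ'c.inv₀ fun t => (hΨ'pos t).ne'
  set B : ℝ → ℝ := fun x => ∫ t in a..x, (Ψ' t)⁻¹ with hBdef
  set T : ℝ → ℝ := fun x => ∫ t in x..b, Ψ' t with hTdef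
  have hB_deriv : ∀ x, HasDerivAt B (Ψ' x)⁻¹ x := fun x =>
    intervalIntegral.integral_hasDerivAt_right (hψinv_c.intervalIntegrable a x)
      (hψinv_c.stronglyMeasurableAtFilter volume (nhds x)) hψinv_c.continuousAt
  have hT_deriv : ∀ x, HasDerivAt T (-(Ψ' x)) x := fun x =>
    intervalIntegral.integral_hasDerivAt_left (hΨ'c.intervalIntegrable x b)
      (hΨ'c.stronglyMeasurableAtFilter volume (nhds x)) hΨ'c.continuousAt
  have hB_cont : Continuous B := by
    have : Differentiable ℝ B := fun x => (hB_deriv x).differentiableAt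
    exact this.continuous
  have hT_cont : Continuous T := by
    have : Differentiable ℝ T := fun x => (hT_deriv x).differentiableAt
    exact this.continuous
  have hB_sub : ∀ x y : ℝ, B y - B x = ∫ t in x..y, (Ψ' t)⁻¹ := fun x y =>
    intervalIntegral.integral_interval_sub_left (hψinv_c.intervalIntegrable a y)
      (hψinv_c.intervalIntegrable a x)
  have hB_bound : ∀ x y : ℝ, x ≤ y → (y - x) * M⁻¹ ≤ B y - B x := by
    intro x y hxy
    rw [hB_sub x y]
    calc (y - x) * M⁻¹ = ∫ _ in x..y, M⁻¹ := by
          rw [intervalIntegral.integral_const, smul_eq_mul]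
      _ ≤ ∫ t in x..y, (Ψ' t)⁻¹ := by
          apply intervalIntegral.integral_mono_on hxy intervalIntegrable_const
            (hψinv_c.intervalIntegrable x y)
          intro t _
          exact inv_anti₀ (hΨ'pos t) (hub t)
  have hB_mono : Monotone B := by
    intro x y hxy
    have h1 := hB_bound x y hxy
    have h2 : 0 ≤ (y - x) * M⁻¹ := mul_nonneg (by linarith) (inv_nonneg.2 hM.le)
    linarith
  have hBa : B a = 0 := intervalIntegral.integral_same
  have hB_pos : ∀ x, a < x → 0 < B x := by
    intro x hax
    have h1 := hB_bound a x hax.le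
    rw [hBa] at h1
    have h0 : 0 < (x - a) * M⁻¹ := mul_pos (by linarith) (inv_pos.2 hM)
    linarith
  have hTb : T b = 0 := intervalIntegral.integral_same
  -- square root of B
  set sB : ℝ → ℝ := fun t => Real.sqrt (B t) with hsBdef
  have hsB_cont : Continuous sB := hB_cont.sqrt
  have hsB_nonneg : ∀ t, 0 ≤ sB t := fun t => Real.sqrt_nonneg _
  have hsB_pos : ∀ t, a < t → 0 < sB t := fun t ht => Real.sqrt_pos.2 (hB_pos t ht)
  have hsBa : sB a = 0 := by simp only [hsBdef]; rw [hBa, Real.sqrt_zero]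
  have hsB_sq : ∀ t, a < t → sB t * sB t = B t := fun t ht =>
    Real.mul_self_sqrt (hB_pos t ht).le
  have hsB_deriv : ∀ t, a < t → HasDerivAt sB ((Ψ' t)⁻¹ / (2 * sB t)) t := fun t ht =>
    (hB_deriv t).sqrt (hB_pos t ht).ne'
  have hsB_mono : Monotone sB := fun x y hxy => Real.sqrt_le_sqrt (hB_mono hxy)
  -- derivative bound for F
  have hdF : ∀ t, |deriv F t| ≤ C := abs_deriv_le_of_lipschitz hF
  have hdF2 : ∀ t, (deriv F t) ^ 2 ≤ (C : ℝ) ^ 2 := fun t => by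
    rw [← sq_abs]
    exact pow_le_pow_left₀ (abs_nonneg _) (hdF t) 2
  -- integrability of the singular weight
  have hw_int : ∀ x ∈ Set.Ioc a b, IntervalIntegrable (fun t => (Ψ' t * sB t)⁻¹) volume a x := by
    intro x hx
    have h0 : IntervalIntegrable (fun s : ℝ => s ^ (-(1/2) : ℝ)) volume 0 (x - a) :=
      intervalIntegral.intervalIntegrable_rpow' (by norm_num)
    have h1 := h0.comp_sub_right a
    rw [zero_add, sub_add_cancel] at h1
    have hdom : IntervalIntegrable
        (fun t => Real.sqrt M * m⁻¹ * ((t - a) ^ (-(1/2) : ℝ))) volume a x :=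
      h1.const_mul _
    apply hdom.mono_fun'
    · exact ((hΨ'c.mul hsB_cont).measurable.inv).aestronglyMeasurable
    · rw [uIoc_of_le hx.1.le]
      apply ae_restrict_of_forall_mem measurableSet_Ioc
      intro t ht
      have hta : 0 < t - a := by linarith [ht.1]
      have hBt : (t - a) * M⁻¹ ≤ B t := by
        have := hB_bound a t ht.1.le; rw [hBa] at this; linarith
      have hsBt : Real.sqrt (t - a) * (Real.sqrt M)⁻¹ ≤ sB t := by
        have h2 : Real.sqrt ((t - a) * M⁻¹) ≤ sB t := Real.sqrt_le_sqrt hBt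
        rwa [Real.sqrt_mul hta.le, Real.sqrt_inv] at h2
      have hsqta : 0 < Real.sqrt (t - a) := Real.sqrt_pos.2 hta
      have hsqM : 0 < Real.sqrt M := Real.sqrt_pos.2 hM
      have hden_pos : 0 < m * (Real.sqrt (t - a) * (Real.sqrt M)⁻¹) := by positivity
      have hden_le : m * (Real.sqrt (t - a) * (Real.sqrt M)⁻¹) ≤ Ψ' t * sB t := by
        apply mul_le_mul (hlb t) hsBt (by positivity) (hΨ'pos t).le
      simp only [Real.norm_eq_abs]
      rw [abs_of_nonneg (inv_nonneg.2 (le_trans hden_pos.le hden_le))]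
      have hrpow : (t - a) ^ (-(1/2) : ℝ) = (Real.sqrt (t - a))⁻¹ := by
        rw [Real.rpow_neg hta.le, Real.sqrt_eq_rpow]
      rw [hrpow]
      calc (Ψ' t * sB t)⁻¹ ≤ (m * (Real.sqrt (t - a) * (Real.sqrt M)⁻¹))⁻¹ :=
            inv_anti₀ hden_pos hden_le
        _ = Real.sqrt M * m⁻¹ * (Real.sqrt (t - a))⁻¹ := by
            field_simp
  -- Step A : the weight integral
  have hstepA : ∀ x ∈ Set.Ioc a b, (∫ t in a..x, (Ψ' t * sB t)⁻¹) = 2 * sB x := by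
    intro x hx
    have h2c : Continuous fun t => 2 * sB t := by continuity
    have heval := intervalIntegral.integral_eq_sub_of_hasDeriv_right_of_le hx.1.le
      h2c.continuousOn
      (fun t ht => by
        have h := ((hsB_deriv t ht.1).const_mul (2 : ℝ)).hasDerivWithinAt (s := Set.Ioi t)
        have hne := (hsB_pos t ht.1).ne'
        have hψ := (hΨ'pos t).ne'
        convert h using 1
        field_simp)
      (hw_int x hx)
    rw [heval, hsBa, mul_zero, sub_zero]
  -- the G function
  set G : ℝ → ℝ := fun t => (deriv F t) ^ 2 * Ψ' t * sB t with hGdef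
  have hG_nonneg : ∀ t, 0 ≤ G t := fun t =>
    mul_nonneg (mul_nonneg (sq_nonneg _) (hΨ'pos t).le) (hsB_nonneg t)
  have hG_meas : Measurable G :=
    (((measurable_deriv F).pow_const 2).mul hΨ'c.measurable).mul hsB_cont.measurable
  have hG_ptbd : ∀ t, G t ≤ (C : ℝ) ^ 2 * M * sB t := by
    intro t
    have h1 : (deriv F t) ^ 2 * Ψ' t ≤ (C : ℝ) ^ 2 * M := by
      have := hdF2 t
      have h2 := hub t
      have h3 := (hΨ'pos t).le
      nlinarith [sq_nonneg (deriv F t)]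
    exact mul_le_mul_of_nonneg_right h1 (hsB_nonneg t)
  have hG_bd : ∀ t, t ≤ b → G t ≤ (C : ℝ) ^ 2 * M * sB b := fun t ht =>
    le_trans (hG_ptbd t) (mul_le_mul_of_nonneg_left (hsB_mono ht) (by positivity))
  have hG_ii : ∀ u v : ℝ, IntervalIntegrable G volume u v := by
    intro u v
    apply IntervalIntegrable.mono_fun'
      (g := fun t => (C : ℝ) ^ 2 * M * sB t)
      (((continuous_const.mul hsB_cont)).intervalIntegrable u v)
      hG_meas.aestronglyMeasurable
    refine Eventually.of_forall fun t => ?_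
    simp only [Real.norm_eq_abs]
    rw [abs_of_nonneg (hG_nonneg t)]
    exact hG_ptbd t
  -- Step B : the pointwise bound
  have hstepB : ∀ x ∈ Set.Ioc a b, F x ^ 2 ≤ 2 * sB x * ∫ t in Set.Ioc a x, G t := by
    intro x hx
    set μ := volume.restrict (Set.Ioc a x) with hμdef
    haveI : IsFiniteMeasure μ := ⟨by
      rw [hμdef, Measure.restrict_apply_univ]; exact measure_Ioc_lt_top⟩
    set u : ℝ → ℝ := fun t => |deriv F t| * Real.sqrt (Ψ' t) * Real.sqrt (sB t) with hudef
    set v : ℝ → ℝ := fun t => (Real.sqrt (Ψ' t) * Real.sqrt (sB t))⁻¹ with hvdef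
    have hu_meas : Measurable u :=
      (((measurable_deriv F).abs).mul (hΨ'c.sqrt).measurable).mul (hsB_cont.sqrt).measurable
    have hv_meas : Measurable v :=
      (((hΨ'c.sqrt).measurable).mul (hsB_cont.sqrt).measurable).inv
    have hu_nonneg : ∀ t, 0 ≤ u t := fun t => by
      apply mul_nonneg (mul_nonneg (abs_nonneg _) (Real.sqrt_nonneg _)) (Real.sqrt_nonneg _)
    have hv_nonneg : ∀ t, 0 ≤ v t := fun t =>
      inv_nonneg.2 (mul_nonneg (Real.sqrt_nonneg _) (Real.sqrt_nonneg _))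
    have hu_sq : ∀ t, u t ^ 2 = G t := by
      intro t
      simp only [hudef, hGdef]
      rw [mul_pow, mul_pow, sq_abs, Real.sq_sqrt (hΨ'pos t).le, Real.sq_sqrt (hsB_nonneg t)]
    have hv_sq : ∀ t, v t ^ 2 = (Ψ' t * sB t)⁻¹ := by
      intro t
      simp only [hvdef]
      rw [inv_pow, mul_pow, Real.sq_sqrt (hΨ'pos t).le, Real.sq_sqrt (hsB_nonneg t)]
    have huv : ∀ t ∈ Set.Ioc a x, u t * v t = |deriv F t| := by
      intro t ht
      have h1 : 0 < Real.sqrt (Ψ' t) := Real.sqrt_pos.2 (hΨ'pos t)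
      have h2 : 0 < Real.sqrt (sB t) := Real.sqrt_pos.2 (hsB_pos t ht.1)
      simp only [hudef, hvdef]
      field_simp
    have hFx : F x = ∫ t in Set.Ioc a x, deriv F t := by
      rw [lipschitz_setIntegral_deriv hF hx.1.le, hFa, sub_zero]
    have habs : |F x| ≤ ∫ t in Set.Ioc a x, |deriv F t| := by
      rw [hFx]
      simpa [Real.norm_eq_abs] using
        norm_integral_le_integral_norm (μ := μ) (f := fun t => deriv F t)
    have hce : (∫ t in Set.Ioc a x, |deriv F t|) = ∫ t, u t * v t ∂μ :=
      setIntegral_congr_fun measurableSet_Ioc fun t ht => (huv t ht).symm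
    have hu2int : Integrable (fun t => u t ^ 2) μ := by
      apply Integrable.mono' (integrable_const ((C : ℝ) ^ 2 * M * sB b))
        ((hu_meas.pow_const 2).aestronglyMeasurable)
      filter_upwards [ae_restrict_mem measurableSet_Ioc] with t ht
      rw [Real.norm_eq_abs, abs_of_nonneg (sq_nonneg _), hu_sq t]
      exact hG_bd t (le_trans ht.2 hx.2)
    have hv2int : Integrable (fun t => v t ^ 2) μ := by
      have hIoc : IntegrableOn (fun t => (Ψ' t * sB t)⁻¹) (Set.Ioc a x) volume :=
        (intervalIntegrable_iff_integrableOn_Ioc_of_le hx.1.le).1 (hw_int x hx)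
      exact hIoc.congr_fun (fun t _ => (hv_sq t).symm) measurableSet_Ioc
    have hu2 : MemLp u 2 μ :=
      (memLp_two_iff_integrable_sq hu_meas.aestronglyMeasurable).2 hu2int
    have hv2 : MemLp v 2 μ :=
      (memLp_two_iff_integrable_sq hv_meas.aestronglyMeasurable).2 hv2int
    have hCS := integral_cauchy_schwarz (Eventually.of_forall hu_nonneg)
      (Eventually.of_forall hv_nonneg) hu2 hv2
    have h1 : (∫ t, u t ^ 2 ∂μ) = ∫ t in Set.Ioc a x, G t :=
      integral_congr_ae (Eventually.of_forall fun t => hu_sq t)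
    have h2 : (∫ t, v t ^ 2 ∂μ) = 2 * sB x := by
      have := hstepA x hx
      rw [intervalIntegral.integral_of_le hx.1.le] at this
      rw [← this]
      exact integral_congr_ae (Eventually.of_forall fun t => hv_sq t)
    have habs' : |F x| ≤ ∫ t, u t * v t ∂μ := by rw [← hce]; exact habs
    calc F x ^ 2 = |F x| ^ 2 := (sq_abs _).symm
      _ ≤ (∫ t, u t * v t ∂μ) ^ 2 := pow_le_pow_left₀ (abs_nonneg _) habs' 2
      _ ≤ (∫ t, u t ^ 2 ∂μ) * ∫ t, v t ^ 2 ∂μ := hCS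
      _ = 2 * sB x * ∫ t in Set.Ioc a x, G t := by rw [h1, h2]; ring
  -- the primitive K and weight w
  set K : ℝ → ℝ := fun x => ∫ t in a..x, G t with hKdef
  have hK_cont : Continuous K := intervalIntegral.continuous_primitive hG_ii a
  have hK_eq : ∀ x, a ≤ x → K x = ∫ t in Set.Ioc a x, G t := fun x hx =>
    intervalIntegral.integral_of_le hx
  set w : ℝ → ℝ := fun x => Ψ' x * sB x with hwdef
  have hw_cont : Continuous w := hΨ'c.mul hsB_cont
  have hw_nonneg : ∀ x, 0 ≤ w x := fun x => mul_nonneg (hΨ'pos x).le (hsB_nonneg x)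
  have hw_bd : ∀ x, x ≤ b → w x ≤ M * sB b := fun x hx =>
    mul_le_mul (hub x) (hsB_mono hx) (hsB_nonneg x) hM.le
  -- Step C : integrate the pointwise bound
  have hFcont : Continuous F := hF.continuous
  have hstepC : (∫ x in Set.Ioc a b, F x ^ 2 * Ψ' x) ≤
      ∫ x in Set.Ioc a b, 2 * (w x * K x) := by
    apply setIntegral_mono_on
    · exact (((hFcont.pow 2).mul hΨ'c).continuousOn.integrableOn_compact
        isCompact_Icc).mono_set Set.Ioc_subset_Icc_self
    · exact ((continuous_const.mul (hw_cont.mul hK_cont)).continuousOn.integrableOn_compact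
        isCompact_Icc).mono_set Set.Ioc_subset_Icc_self
    · exact measurableSet_Ioc
    · intro x hx
      have hB1 := hstepB x hx
      rw [← hK_eq x hx.1.le] at hB1
      have hψx := (hΨ'pos x).le
      have := mul_le_mul_of_nonneg_right hB1 hψx
      calc F x ^ 2 * Ψ' x ≤ 2 * sB x * K x * Ψ' x := this
        _ = 2 * (w x * K x) := by simp only [hwdef]; ring
  -- the function H
  set H : ℝ → ℝ := fun t => ∫ x in t..b, w x with hHdef
  have hH_cont : Continuous H := by
    have : H = fun t => -∫ x in b..t, w x := by
      funext t
      simp only [hHdef]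
      rw [← intervalIntegral.integral_symm]
    rw [this]
    exact (intervalIntegral.continuous_primitive (fun u v => hw_cont.intervalIntegrable u v) b).neg
  have hH_eq : ∀ t, t ≤ b → H t = ∫ x in Set.Ioc t b, w x := fun t ht =>
    intervalIntegral.integral_of_le ht
  have hH_bd : ∀ t, a ≤ t → t ≤ b → H t ≤ (b - a) * (M * sB b) := by
    intro t hta htb
    rw [hH_eq t htb]
    calc (∫ x in Set.Ioc t b, w x) ≤ ∫ _ in Set.Ioc t b, M * sB b := by
          apply setIntegral_mono_on
          · exact ((hw_cont.continuousOn.integrableOn_compact isCompact_Icc).mono_set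
              Set.Ioc_subset_Icc_self)
          · exact integrableOn_const measure_Ioc_lt_top.ne
          · exact measurableSet_Ioc
          · intro x hx
            exact hw_bd x hx.2
      _ = (volume (Set.Ioc t b)).toReal * (M * sB b) := by rw [setIntegral_const, smul_eq_mul]; rfl
      _ ≤ (b - a) * (M * sB b) := by
          apply mul_le_mul_of_nonneg_right _ (by positivity)
          rw [Real.volume_Ioc, ENNReal.toReal_ofReal (by linarith)]
          linarith
  have hH_nonneg : ∀ t, t ≤ b → 0 ≤ H t := by
    intro t ht
    rw [hH_eq t ht]
    exact setIntegral_nonneg measurableSet_Ioc fun x _ => hw_nonneg x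
  -- Step D : Fubini
  have hFub : (∫ x in Set.Ioc a b, w x * K x) = ∫ t in Set.Ioc a b, G t * H t := by
    set ν := volume.restrict (Set.Ioc a b) with hνdef
    haveI : IsFiniteMeasure ν := ⟨by
      rw [hνdef, Measure.restrict_apply_univ]; exact measure_Ioc_lt_top⟩
    set Q : ℝ → ℝ → ℝ := fun x t => if t ≤ x then w x * G t else 0 with hQdef
    have hQmeas : Measurable (Function.uncurry Q) := by
      apply Measurable.ite (measurableSet_le measurable_snd measurable_fst)
      · exact (hw_cont.measurable.comp measurable_fst).mul (hG_meas.comp measurable_snd)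
      · exact measurable_const
    have hQint : Integrable (Function.uncurry Q) (ν.prod ν) := by
      apply Integrable.mono' (integrable_const ((M * sB b) * ((C : ℝ) ^ 2 * M * sB b)))
        hQmeas.aestronglyMeasurable
      rw [hνdef, Measure.prod_restrict]
      filter_upwards [ae_restrict_mem (measurableSet_Ioc.prod measurableSet_Ioc)] with p hp
      obtain ⟨hp1, hp2⟩ := hp
      rw [Real.norm_eq_abs]
      simp only [Function.uncurry, hQdef]
      split_ifs with h
      · rw [abs_of_nonneg (mul_nonneg (hw_nonneg _) (hG_nonneg _))]
        exact mul_le_mul (hw_bd _ hp1.2) (hG_bd _ hp2.2) (hG_nonneg _)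
          (by positivity)
      · rw [abs_zero]
        positivity
    have hswap := integral_integral_swap hQint
    have hleft : (∫ x, ∫ t, Q x t ∂ν ∂ν) = ∫ x in Set.Ioc a b, w x * K x := by
      apply setIntegral_congr_fun measurableSet_Ioc
      intro x hx
      have hstep1 : (∫ t, Q x t ∂ν) = ∫ t, (Set.Iic x).indicator (fun t => w x * G t) t ∂ν := by
        apply integral_congr_ae
        filter_upwards with t
        simp only [hQdef, Set.indicator_apply, Set.mem_Iic]
      show (∫ t, Q x t ∂ν) = w x * K x
      rw [hstep1, integral_indicator measurableSet_Iic, hνdef,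
        Measure.restrict_restrict measurableSet_Iic]
      have hset : Set.Iic x ∩ Set.Ioc a b = Set.Ioc a x := by
        rw [Set.inter_comm, Set.Ioc_inter_Iic, min_eq_right hx.2]
      rw [hset, integral_const_mul, ← hK_eq x hx.1.le]
    have hright : (∫ t, ∫ x, Q x t ∂ν ∂ν) = ∫ t in Set.Ioc a b, G t * H t := by
      apply setIntegral_congr_fun measurableSet_Ioc
      intro t ht
      have hstep1 : (∫ x, Q x t ∂ν) = ∫ x, (Set.Ici t).indicator (fun x => w x * G t) x ∂ν := by
        apply integral_congr_ae
        filter_upwards with x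
        simp only [hQdef, Set.indicator_apply, Set.mem_Ici]
      show (∫ x, Q x t ∂ν) = G t * H t
      rw [hstep1, integral_indicator measurableSet_Ici, hνdef,
        Measure.restrict_restrict measurableSet_Ici]
      have hset : Set.Ici t ∩ Set.Ioc a b = Set.Icc t b := by
        ext y
        simp only [Set.mem_inter_iff, Set.mem_Ici, Set.mem_Ioc, Set.mem_Icc]
        constructor
        · rintro ⟨h1, _, h3⟩; exact ⟨h1, h3⟩
        · rintro ⟨h1, h2⟩; exact ⟨h1, ht.1.trans_le h1, h2⟩
      rw [hset, integral_Icc_eq_integral_Ioc, integral_mul_const, ← hH_eq t ht.2, mul_comm]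
    rw [← hleft, ← hright]
    exact hswap
  -- Step E : bound H
  have hstepE : ∀ t ∈ Set.Ioc a b, H t ≤ 2 * A / sB t := by
    intro t ht
    have hBt := hB_pos t ht.1
    have hsBt := hsB_pos t ht.1
    set q : ℝ → ℝ := fun x => T x * ((Ψ' x)⁻¹ / (2 * sB x)) with hqdef
    set r : ℝ → ℝ := fun x => (Ψ' x)⁻¹ / (2 * (B x * sB x)) with hrdef
    have hq_cont : ContinuousOn q (Set.Icc t b) := by
      apply hT_cont.continuousOn.mul
      apply hψinv_c.continuousOn.div (by fun_prop)
      intro x hx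
      have := hsB_pos x (lt_of_lt_of_le ht.1 hx.1)
      positivity
    have hr_cont : ContinuousOn r (Set.Icc t b) := by
      apply hψinv_c.continuousOn.div (by fun_prop)
      intro x hx
      have h1 := hB_pos x (lt_of_lt_of_le ht.1 hx.1)
      have h2 := hsB_pos x (lt_of_lt_of_le ht.1 hx.1)
      positivity
    have hq_ii : IntervalIntegrable q volume t b := by
      rw [intervalIntegrable_iff_integrableOn_Ioc_of_le ht.2]
      exact (hq_cont.integrableOn_compact isCompact_Icc).mono_set Set.Ioc_subset_Icc_self
    have hr_ii : IntervalIntegrable r volume t b := by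
      rw [intervalIntegrable_iff_integrableOn_Ioc_of_le ht.2]
      exact (hr_cont.integrableOn_compact isCompact_Icc).mono_set Set.Ioc_subset_Icc_self
    have hw_ii : IntervalIntegrable w volume t b := hw_cont.intervalIntegrable t b
    -- E1 : integration by parts
    have hE1 : (∫ x in t..b, (w x - q x)) = T t * sB t := by
      have hgc : ContinuousOn (fun y => -(T y * sB y)) (Set.Icc t b) :=
        ((hT_cont.mul hsB_cont).neg).continuousOn
      have heval := intervalIntegral.integral_eq_sub_of_hasDeriv_right_of_le ht.2 hgc
        (fun x hx => by
          have hax : a < x := ht.1.trans hx.1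
          have hd := ((hT_deriv x).mul (hsB_deriv x hax)).neg
          have : -(-Ψ' x * sB x + T x * ((Ψ' x)⁻¹ / (2 * sB x))) = w x - q x := by
            simp only [hwdef, hqdef]; ring
          rw [this] at hd
          exact hd.hasDerivWithinAt)
        (hw_ii.sub hq_ii)
      rw [heval, hTb]
      ring
    -- E2 : the exact integral of r
    have hE2 : (∫ x in t..b, r x) = (sB t)⁻¹ - (sB b)⁻¹ := by
      have hgc : ContinuousOn (fun y => -(sB y)⁻¹) (Set.Icc t b) := by
        apply ContinuousOn.neg
        apply ContinuousOn.inv₀ hsB_cont.continuousOn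
        intro x hx
        exact (hsB_pos x (lt_of_lt_of_le ht.1 hx.1)).ne'
      have heval := intervalIntegral.integral_eq_sub_of_hasDeriv_right_of_le ht.2 hgc
        (fun x hx => by
          have hax : a < x := ht.1.trans hx.1
          have hne := (hsB_pos x hax).ne'
          have hd := ((hsB_deriv x hax).inv hne).neg
          have heq : -(-((Ψ' x)⁻¹ / (2 * sB x)) / sB x ^ 2) = r x := by
            simp only [hrdef]
            rw [← hsB_sq x hax, sq]
            field_simp
          rw [heq] at hd
          exact hd.hasDerivWithinAt)
        hr_ii
      rw [heval]
      ring
    -- E3 : pointwise comparison q ≤ A * r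
    have hE3 : ∀ x ∈ Set.Icc t b, q x ≤ A * r x := by
      intro x hx
      have hax : a < x := lt_of_lt_of_le ht.1 hx.1
      have hBx := hB_pos x hax
      have hsBx := hsB_pos x hax
      have hTA : B x * T x ≤ A := hA x ⟨ht.1.le.trans hx.1, hx.2⟩
      have hTle : T x ≤ A / B x := by
        rw [le_div_iff₀ hBx]
        calc T x * B x = B x * T x := mul_comm _ _
          _ ≤ A := hTA
      have hpos : (0:ℝ) < (Ψ' x)⁻¹ / (2 * sB x) := by
        have := hΨ'pos x
        positivity
      calc q x ≤ (A / B x) * ((Ψ' x)⁻¹ / (2 * sB x)) :=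
            mul_le_mul_of_nonneg_right hTle hpos.le
        _ = A * r x := by
            simp only [hrdef]
            field_simp
    have hE3' : (∫ x in t..b, q x) ≤ ∫ x in t..b, A * r x :=
      intervalIntegral.integral_mono_on ht.2 hq_ii (hr_ii.const_mul A) hE3
    -- E4 : conclude
    have hsplit : (∫ x in t..b, w x) = T t * sB t + ∫ x in t..b, q x := by
      have := intervalIntegral.integral_sub hw_ii hq_ii
      rw [hE1] at this
      linarith [this]
    have hTt : T t * sB t ≤ A / sB t := by
      rw [le_div_iff₀ hsBt]
      have hTA : B t * T t ≤ A := hA t ⟨ht.1.le, ht.2⟩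
      calc T t * sB t * sB t = T t * (sB t * sB t) := by ring
        _ = T t * B t := by rw [hsB_sq t ht.1]
        _ ≤ A := by linarith [hTA]
    have hqle : (∫ x in t..b, q x) ≤ A / sB t := by
      calc (∫ x in t..b, q x) ≤ ∫ x in t..b, A * r x := hE3'
        _ = A * ((sB t)⁻¹ - (sB b)⁻¹) := by
            rw [intervalIntegral.integral_const_mul, hE2]
        _ ≤ A * (sB t)⁻¹ := by
            have h1 : 0 ≤ (sB b)⁻¹ := inv_nonneg.2 (hsB_nonneg b)
            nlinarith
        _ = A / sB t := by rw [div_eq_mul_inv]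
    rw [hH_eq t ht.2, ← intervalIntegral.integral_of_le ht.2]
    calc (∫ x in t..b, w x) = T t * sB t + ∫ x in t..b, q x := hsplit
      _ ≤ A / sB t + A / sB t := add_le_add hTt hqle
      _ = 2 * A / sB t := by ring
  -- Step F : conclude
  have hstepF : ∀ t ∈ Set.Ioc a b, G t * H t ≤ 2 * A * ((deriv F t) ^ 2 * Ψ' t) := by
    intro t ht
    have h1 := hstepE t ht
    have hsBt := hsB_pos t ht.1
    calc G t * H t ≤ G t * (2 * A / sB t) := mul_le_mul_of_nonneg_left h1 (hG_nonneg t)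
      _ = 2 * A * ((deriv F t) ^ 2 * Ψ' t) := by
          simp only [hGdef]
          field_simp
  have hGH_int : IntegrableOn (fun t => G t * H t) (Set.Ioc a b) volume := by
    apply Integrable.mono'
      (integrable_const (((C : ℝ) ^ 2 * M * sB b) * ((b - a) * (M * sB b))))
      ((hG_meas.mul hH_cont.measurable).aestronglyMeasurable)
    filter_upwards [ae_restrict_mem measurableSet_Ioc] with t ht
    rw [Real.norm_eq_abs, Pi.mul_apply, abs_of_nonneg (mul_nonneg (hG_nonneg t) (hH_nonneg t ht.2))]
    exact mul_le_mul (hG_bd t ht.2) (hH_bd t ht.1.le ht.2) (hH_nonneg t ht.2) (by positivity)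
  have hd2ψ_int : IntegrableOn (fun t => (deriv F t) ^ 2 * Ψ' t) (Set.Ioc a b) volume := by
    apply Integrable.mono' (integrable_const ((C : ℝ) ^ 2 * M))
      (((measurable_deriv F).pow_const 2 |>.mul hΨ'c.measurable).aestronglyMeasurable)
    filter_upwards [ae_restrict_mem measurableSet_Ioc] with t _
    rw [Real.norm_eq_abs, Pi.mul_apply, abs_of_nonneg (mul_nonneg (sq_nonneg _) (hΨ'pos t).le)]
    have := hdF2 t
    have h2 := hub t
    have h3 := (hΨ'pos t).le
    nlinarith [sq_nonneg (deriv F t)]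
  calc (∫ x in Set.Ioc a b, F x ^ 2 * Ψ' x)
      ≤ ∫ x in Set.Ioc a b, 2 * (w x * K x) := hstepC
    _ = 2 * ∫ x in Set.Ioc a b, w x * K x := integral_const_mul 2 _
    _ = 2 * ∫ t in Set.Ioc a b, G t * H t := by rw [hFub]
    _ ≤ 2 * ∫ t in Set.Ioc a b, 2 * A * ((deriv F t) ^ 2 * Ψ' t) := by
        apply mul_le_mul_of_nonneg_left _ (by norm_num)
        exact setIntegral_mono_on hGH_int (hd2ψ_int.const_mul _) measurableSet_Ioc hstepF
    _ = 4 * A * ∫ x in Set.Ioc a b, (deriv F x) ^ 2 * Ψ' x := by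
        rw [integral_const_mul]
        ring

/-- Muckenhoupt's criterion (Proposition 5.1). -/
theorem stmt_7 (a b : ℝ) (hab : a < b) (Ψ : ℝ → ℝ)
    (hΨsm : ContDiffOn ℝ (⊤ : ℕ∞) Ψ (Set.Icc a b))
    (hΨpos : ∀ x ∈ Set.Icc a b, 0 < Ψ x)
    (lam : ℝ)
    (hlam : IsGreatest {l : ℝ | 0 ≤ l ∧ ∀ f : ℝ → ℝ,
        (∃ C : NNReal, LipschitzOnWith C f (Set.Icc a b)) → f a = 0 →
        l * (∫ x in a..b, (f x) ^ 2 * Ψ x) ≤ ∫ x in a..b, (deriv f x) ^ 2 * Ψ x} lam)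
    (A : ℝ)
    (hA : A = sSup ((fun x => (∫ t in a..x, 1 / Ψ t) * (∫ t in x..b, Ψ t)) '' Set.Icc a b)) :
    A ≤ 1 / lam ∧ 1 / lam ≤ 4 * A := by
  have hIcc_ne : (Set.Icc a b).Nonempty := Set.nonempty_Icc.2 hab.le
  have hΨc : ContinuousOn Ψ (Set.Icc a b) := hΨsm.continuousOn
  obtain ⟨zm, hzm, hm_min'⟩ := isCompact_Icc.exists_isMinOn hIcc_ne hΨc
  obtain ⟨zM, hzM, hM_max'⟩ := isCompact_Icc.exists_isMaxOn hIcc_ne hΨc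
  set m := Ψ zm with hm_def
  set M := Ψ zM with hM_def
  have hm_min : ∀ x ∈ Set.Icc a b, m ≤ Ψ x := fun x hx => hm_min' hx
  have hM_max : ∀ x ∈ Set.Icc a b, Ψ x ≤ M := fun x hx => hM_max' hx
  have hm_pos : 0 < m := hΨpos zm hzm
  -- the clamped density
  set cl : ℝ → ℝ := fun x => max a (min x b) with hcl
  have hcl_mem : ∀ x, cl x ∈ Set.Icc a b := fun x =>
    ⟨le_max_left _ _, max_le hab.le (min_le_right _ _)⟩
  have hcl_eq : ∀ x ∈ Set.Icc a b, cl x = x := fun x hx => by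
    simp only [hcl]; rw [min_eq_left hx.2, max_eq_right hx.1]
  set Ψ' : ℝ → ℝ := fun x => Ψ (cl x) with hΨ'def
  have hcl_cont : Continuous cl := by fun_prop
  have hΨ'c : Continuous Ψ' := hΨc.comp_continuous hcl_cont hcl_mem
  have hΨ'eq : ∀ x ∈ Set.Icc a b, Ψ' x = Ψ x := fun x hx => by
    simp only [hΨ'def]; rw [hcl_eq x hx]
  have hΨ'm : ∀ x, m ≤ Ψ' x := fun x => hm_min _ (hcl_mem x)
  have hΨ'M : ∀ x, Ψ' x ≤ M := fun x => hM_max _ (hcl_mem x)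
  have hΨ'pos : ∀ x, 0 < Ψ' x := fun x => lt_of_lt_of_le hm_pos (hΨ'm x)
  have hM_pos : 0 < M := lt_of_lt_of_le hm_pos (le_trans (hΨ'm a) (hΨ'M a))
  have hψinv_c : Continuous fun t => (Ψ' t)⁻¹ := hΨ'c.inv₀ fun t => (hΨ'pos t).ne'
  -- primitives
  set B : ℝ → ℝ := fun x => ∫ t in a..x, (Ψ' t)⁻¹ with hBdef
  set T : ℝ → ℝ := fun x => ∫ t in x..b, Ψ' t with hTdef
  have hB_deriv : ∀ x, HasDerivAt B (Ψ' x)⁻¹ x := fun x =>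
    intervalIntegral.integral_hasDerivAt_right (hψinv_c.intervalIntegrable a x)
      (hψinv_c.stronglyMeasurableAtFilter volume (nhds x)) hψinv_c.continuousAt
  have hT_deriv : ∀ x, HasDerivAt T (-(Ψ' x)) x := fun x =>
    intervalIntegral.integral_hasDerivAt_left (hΨ'c.intervalIntegrable x b)
      (hΨ'c.stronglyMeasurableAtFilter volume (nhds x)) hΨ'c.continuousAt
  have hB_cont : Continuous B := by
    have : Differentiable ℝ B := fun x => (hB_deriv x).differentiableAt
    exact this.continuous
  have hT_cont : Continuous T := by
    have : Differentiable ℝ T := fun x => (hT_deriv x).differentiableAt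
    exact this.continuous
  have hB_sub : ∀ x y : ℝ, B y - B x = ∫ t in x..y, (Ψ' t)⁻¹ := fun x y =>
    intervalIntegral.integral_interval_sub_left (hψinv_c.intervalIntegrable a y)
      (hψinv_c.intervalIntegrable a x)
  have hB_bound : ∀ x y : ℝ, x ≤ y → (y - x) * M⁻¹ ≤ B y - B x ∧ B y - B x ≤ (y - x) * m⁻¹ := by
    intro x y hxy
    rw [hB_sub x y]
    constructor
    · calc (y - x) * M⁻¹ = ∫ _ in x..y, M⁻¹ := by rw [intervalIntegral.integral_const, smul_eq_mul]
        _ ≤ ∫ t in x..y, (Ψ' t)⁻¹ := by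
            apply intervalIntegral.integral_mono_on hxy (intervalIntegrable_const)
              (hψinv_c.intervalIntegrable x y)
            intro t _
            exact inv_anti₀ (hΨ'pos t) (hΨ'M t)
    · calc (∫ t in x..y, (Ψ' t)⁻¹) ≤ ∫ _ in x..y, m⁻¹ := by
            apply intervalIntegral.integral_mono_on hxy (hψinv_c.intervalIntegrable x y)
              intervalIntegrable_const
            intro t _
            exact inv_anti₀ hm_pos (hΨ'm t)
        _ = (y - x) * m⁻¹ := by rw [intervalIntegral.integral_const]; rw [smul_eq_mul]
  have hB_mono : Monotone B := by
    intro x y hxy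
    have := (hB_bound x y hxy).1
    have : 0 ≤ B y - B x := le_trans (mul_nonneg (by linarith) (inv_nonneg.2 hM_pos.le)) this
    linarith
  have hBa : B a = 0 := intervalIntegral.integral_same
  have hB_pos : ∀ x, a < x → 0 < B x := by
    intro x hax
    have := (hB_bound a x hax.le).1
    rw [hBa] at this
    have h0 : 0 < (x - a) * M⁻¹ := mul_pos (by linarith) (inv_pos.2 hM_pos)
    linarith
  have hT_sub : ∀ x y : ℝ, x ≤ y → T x - T y = ∫ t in x..y, Ψ' t := by
    intro x y _
    rw [hTdef]
    simp only
    rw [← intervalIntegral.integral_add_adjacent_intervals (hΨ'c.intervalIntegrable x y)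
      (hΨ'c.intervalIntegrable y b)]
    ring
  have hTb : T b = 0 := intervalIntegral.integral_same
  have hT_pos : ∀ x, x < b → 0 < T x := by
    intro x hxb
    have h := hT_sub x b hxb.le
    rw [hTb, sub_zero] at h
    rw [h]
    calc (0:ℝ) < (b - x) * m := mul_pos (by linarith) hm_pos
      _ = ∫ _ in x..b, m := by rw [intervalIntegral.integral_const, smul_eq_mul]
      _ ≤ ∫ t in x..b, Ψ' t := intervalIntegral.integral_mono_on hxb.le
          intervalIntegrable_const (hΨ'c.intervalIntegrable x b) fun t _ => hΨ'm t
  have hT_nonneg : ∀ x, x ≤ b → 0 ≤ T x := by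
    intro x hxb
    rcases eq_or_lt_of_le hxb with h | h
    · rw [h, hTb]
    · exact (hT_pos x h).le
  -- the function φ
  set φ : ℝ → ℝ := fun x => B x * T x with hφdef
  have hφc : Continuous φ := hB_cont.mul hT_cont
  have himg : ∀ x ∈ Set.Icc a b,
      (∫ t in a..x, 1 / Ψ t) * (∫ t in x..b, Ψ t) = φ x := by
    intro x hx
    have h1 : (∫ t in a..x, 1 / Ψ t) = B x := by
      apply intervalIntegral.integral_congr
      intro t ht
      rw [Set.uIcc_of_le hx.1] at ht
      have htm : t ∈ Set.Icc a b := ⟨ht.1, le_trans ht.2 hx.2⟩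
      simp only [one_div]
      rw [hΨ'eq t htm]
    have h2 : (∫ t in x..b, Ψ t) = T x := by
      apply intervalIntegral.integral_congr
      intro t ht
      rw [Set.uIcc_of_le hx.2] at ht
      have htm : t ∈ Set.Icc a b := ⟨le_trans hx.1 ht.1, ht.2⟩
      rw [hΨ'eq t htm]
    rw [h1, h2]
  have hA' : A = sSup (φ '' Set.Icc a b) := by
    rw [hA]
    congr 1
    exact Set.image_congr himg
  obtain ⟨xs, hxs, hmax⟩ := isCompact_Icc.exists_isMaxOn hIcc_ne hφc.continuousOn
  have hbdd : BddAbove (φ '' Set.Icc a b) := by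
    refine ⟨φ xs, ?_⟩
    rintro y ⟨x, hx, rfl⟩
    exact hmax hx
  have hφ_le_A : ∀ x ∈ Set.Icc a b, φ x ≤ A := by
    intro x hx
    rw [hA']
    exact le_csSup hbdd ⟨x, hx, rfl⟩
  have hA_pos : 0 < A := by
    have hmid : (a + b) / 2 ∈ Set.Icc a b := ⟨by linarith, by linarith⟩
    have h1 : 0 < φ ((a + b) / 2) :=
      mul_pos (hB_pos _ (by linarith)) (hT_pos _ (by linarith))
    exact lt_of_lt_of_le h1 (hφ_le_A _ hmid)
  -- the membership of 1/(4A) in the set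
  have hhard : (1 / (4 * A)) ∈ {l : ℝ | 0 ≤ l ∧ ∀ f : ℝ → ℝ,
      (∃ C : NNReal, LipschitzOnWith C f (Set.Icc a b)) → f a = 0 →
      l * (∫ x in a..b, (f x) ^ 2 * Ψ x) ≤ ∫ x in a..b, (deriv f x) ^ 2 * Ψ x} := by
    constructor
    · exact le_of_lt (one_div_pos.2 (by linarith))
    · rintro f ⟨C, hflip⟩ hfa
      obtain ⟨F, hFlip, hFeq⟩ := hflip.extend_real
      have hFa : F a = 0 := by rw [← hFeq (Set.left_mem_Icc.2 hab.le)]; exact hfa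
      have h1 : (∫ x in a..b, (f x) ^ 2 * Ψ x) = ∫ x in Set.Ioc a b, F x ^ 2 * Ψ' x := by
        rw [intervalIntegral.integral_of_le hab.le]
        apply setIntegral_congr_fun measurableSet_Ioc
        intro t ht
        have htm : t ∈ Set.Icc a b := Set.Ioc_subset_Icc_self ht
        simp only
        rw [hFeq htm, hΨ'eq t htm]
      have h2 : (∫ x in a..b, (deriv f x) ^ 2 * Ψ x) = ∫ x in Set.Ioc a b, (deriv F x) ^ 2 * Ψ' x := by
        rw [intervalIntegral.integral_of_le hab.le, integral_Ioc_eq_integral_Ioo,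
          integral_Ioc_eq_integral_Ioo]
        apply setIntegral_congr_fun measurableSet_Ioo
        intro t ht
        have htm : t ∈ Set.Icc a b := Set.Ioo_subset_Icc_self ht
        have hev : f =ᶠ[nhds t] F :=
          eventuallyEq_of_mem (Ioo_mem_nhds ht.1 ht.2) fun s hs => hFeq (Set.Ioo_subset_Icc_self hs)
        simp only
        rw [hev.deriv_eq, hΨ'eq t htm]
      rw [h1, h2]
      have key := muckenhoupt_hard a b hab Ψ' hΨ'c m M hm_pos hΨ'm hΨ'M A hA_pos
        (fun x hx => by
          have hBx : (∫ t in a..x, (Ψ' t)⁻¹) = B x := rfl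
          have hTx : (∫ t in x..b, Ψ' t) = T x := rfl
          rw [hBx, hTx]; exact hφ_le_A x hx) F C hFlip hFa
      have hI' : 0 ≤ ∫ x in Set.Ioc a b, (deriv F x) ^ 2 * Ψ' x :=
        setIntegral_nonneg measurableSet_Ioc fun t _ => mul_nonneg (sq_nonneg _) (hΨ'pos t).le
      rw [div_mul_eq_mul_div, one_mul, div_le_iff₀ (by linarith : (0:ℝ) < 4 * A)]
      calc (∫ x in Set.Ioc a b, F x ^ 2 * Ψ' x)
          ≤ 4 * A * ∫ x in Set.Ioc a b, (deriv F x) ^ 2 * Ψ' x := key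
        _ = (∫ x in Set.Ioc a b, (deriv F x) ^ 2 * Ψ' x) * (4 * A) := by ring
  have hlam_mem := hlam.2 hhard
  have hlam_pos : 0 < lam := lt_of_lt_of_le (one_div_pos.2 (by linarith)) hlam_mem
  constructor
  · -- A ≤ 1/lam
    rw [hA']
    apply csSup_le (hIcc_ne.image φ)
    rintro y ⟨x, hx, rfl⟩
    -- show φ x ≤ 1 / lam
    rcases eq_or_lt_of_le hx.1 with hax | hax
    · have : φ x = 0 := by
        simp only [hφdef]
        rw [← hax, hBa, zero_mul]
      rw [this]
      exact le_of_lt (one_div_pos.2 hlam_pos)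
    · -- test function
      set fx : ℝ → ℝ := fun t => B (min t x) with hfxdef
      have hBlip : LipschitzWith (m⁻¹.toNNReal) B := by
        apply LipschitzWith.of_dist_le_mul
        intro u v
        rw [Real.dist_eq, Real.dist_eq, Real.coe_toNNReal _ (by positivity)]
        rcases le_total u v with h | h
        · have h1 := (hB_bound u v h).1
          have h2 := (hB_bound u v h).2
          rw [abs_sub_comm, abs_of_nonneg (by linarith [hB_mono h]), abs_sub_comm,
            abs_of_nonneg (by linarith)]
          linarith
        · have h1 := (hB_bound v u h).1
          have h2 := (hB_bound v u h).2
          rw [abs_of_nonneg (by linarith [hB_mono h]), abs_of_nonneg (by linarith)]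
          linarith
      have hfxlip : LipschitzWith (m⁻¹.toNNReal) fx := by
        have hmin : LipschitzWith 1 (fun t : ℝ => min t x) :=
          LipschitzWith.min_const LipschitzWith.id x
        have := hBlip.comp hmin
        rwa [mul_one] at this
      have hfxa : fx a = 0 := by
        simp only [hfxdef]
        rw [min_eq_left hax.le, hBa]
      -- derivative identities
      have hd1 : ∀ t ∈ Set.Ioo a x, deriv fx t = (Ψ' t)⁻¹ := by
        intro t ht
        have hev : fx =ᶠ[nhds t] B := by
          filter_upwards [Iio_mem_nhds ht.2] with s hs
          simp only [hfxdef]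
          rw [min_eq_left (le_of_lt hs)]
        rw [hev.deriv_eq]
        exact (hB_deriv t).deriv
      have hd2 : ∀ t ∈ Set.Ioi x, deriv fx t = 0 := by
        intro t ht
        have hev : fx =ᶠ[nhds t] fun _ => B x := by
          filter_upwards [Ioi_mem_nhds ht] with s hs
          simp only [hfxdef]
          rw [min_eq_right (le_of_lt hs)]
        rw [hev.deriv_eq, deriv_const]
      -- integrability
      have hderiv_bd : ∀ t, |deriv fx t| ≤ m⁻¹ := by
        intro t
        have := abs_deriv_le_of_lipschitz hfxlip t
        rwa [Real.coe_toNNReal _ (by positivity)] at this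
      have hmeas_dfx : Measurable (deriv fx) := measurable_deriv fx
      have hint_main : IntegrableOn (fun t => (deriv fx t) ^ 2 * Ψ t) (Set.Icc a b) volume := by
        have h1 : IntegrableOn (fun t => (deriv fx t) ^ 2 * Ψ' t) (Set.Icc a b) volume := by
          refine Integrable.mono' (integrable_const (m⁻¹ ^ 2 * M)) ?_ ?_
          · exact ((hmeas_dfx.pow_const 2).mul hΨ'c.measurable).aestronglyMeasurable
          · refine Eventually.of_forall fun t => ?_
            have h2 := hderiv_bd t
            have h3 := hΨ'pos t
            have h4 := hΨ'M t
            rw [Real.norm_eq_abs, abs_of_nonneg (by positivity)]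
            have h5 : (deriv fx t) ^ 2 ≤ m⁻¹ ^ 2 := by
              rw [← sq_abs]
              exact pow_le_pow_left₀ (abs_nonneg _) h2 2
            nlinarith
        exact h1.congr_fun (fun t ht => by simp only [hΨ'eq t ht]) measurableSet_Icc
      have hii : ∀ u v, u ∈ Set.Icc a b → v ∈ Set.Icc a b →
          IntervalIntegrable (fun t => (deriv fx t) ^ 2 * Ψ t) volume u v := fun u v hu hv =>
        (hint_main.mono_set (Set.uIcc_subset_Icc hu hv)).intervalIntegrable
      have hint_main2 : IntegrableOn (fun t => fx t ^ 2 * Ψ t) (Set.Icc a b) volume :=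
        (((hfxlip.continuous.pow 2).continuousOn).mul hΨc).integrableOn_compact isCompact_Icc
      have hii2 : ∀ u v, u ∈ Set.Icc a b → v ∈ Set.Icc a b →
          IntervalIntegrable (fun t => fx t ^ 2 * Ψ t) volume u v := fun u v hu hv =>
        (hint_main2.mono_set (Set.uIcc_subset_Icc hu hv)).intervalIntegrable
      have hxmem : x ∈ Set.Icc a b := hx
      have hamem : a ∈ Set.Icc a b := Set.left_mem_Icc.2 hab.le
      have hbmem : b ∈ Set.Icc a b := Set.right_mem_Icc.2 hab.le
      -- RHS computation
      have hI1 : (∫ t in a..x, (deriv fx t) ^ 2 * Ψ t) = B x := by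
        rw [intervalIntegral.integral_of_le hax.le, integral_Ioc_eq_integral_Ioo]
        have heq : ∫ t in Set.Ioo a x, (deriv fx t) ^ 2 * Ψ t
            = ∫ t in Set.Ioo a x, (Ψ' t)⁻¹ := by
          apply setIntegral_congr_fun measurableSet_Ioo
          intro t ht
          have htm : t ∈ Set.Icc a b := ⟨ht.1.le, ht.2.le.trans hx.2⟩
          simp only
          rw [hd1 t ht, ← hΨ'eq t htm, sq]
          field_simp
        rw [heq, ← integral_Ioc_eq_integral_Ioo, ← intervalIntegral.integral_of_le hax.le]
      have hI2 : (∫ t in x..b, (deriv fx t) ^ 2 * Ψ t) = 0 := by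
        rw [intervalIntegral.integral_of_le hx.2, integral_Ioc_eq_integral_Ioo]
        have heq : ∫ t in Set.Ioo x b, (deriv fx t) ^ 2 * Ψ t
            = ∫ t in Set.Ioo x b, (0:ℝ) := by
          apply setIntegral_congr_fun measurableSet_Ioo
          intro t ht
          simp only
          rw [hd2 t ht.1]
          ring
        rw [heq, integral_zero]
      have hRHS : (∫ t in a..b, (deriv fx t) ^ 2 * Ψ t) = B x := by
        rw [← intervalIntegral.integral_add_adjacent_intervals (hii a x hamem hxmem)
          (hii x b hxmem hbmem), hI1, hI2, add_zero]
      -- LHS lower bound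
      have hL2 : (∫ t in x..b, fx t ^ 2 * Ψ t) = B x ^ 2 * T x := by
        have heq : Set.EqOn (fun t => fx t ^ 2 * Ψ t) (fun t => B x ^ 2 * Ψ' t)
            (Set.uIcc x b) := by
          intro t ht
          rw [Set.uIcc_of_le hx.2] at ht
          have htm : t ∈ Set.Icc a b := ⟨hx.1.trans ht.1, ht.2⟩
          simp only [hfxdef]
          rw [min_eq_right ht.1, hΨ'eq t htm]
        rw [intervalIntegral.integral_congr heq, intervalIntegral.integral_const_mul]
      have hL1 : 0 ≤ ∫ t in a..x, fx t ^ 2 * Ψ t := by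
        apply intervalIntegral.integral_nonneg hax.le
        intro t ht
        exact mul_nonneg (sq_nonneg _) (hΨpos t ⟨ht.1, ht.2.trans hx.2⟩).le
      have hLHS : B x ^ 2 * T x ≤ ∫ t in a..b, fx t ^ 2 * Ψ t := by
        rw [← intervalIntegral.integral_add_adjacent_intervals (hii2 a x hamem hxmem)
          (hii2 x b hxmem hbmem), ← hL2]
        linarith
      -- apply the variational characterization
      have hkey := hlam.1.2 fx ⟨m⁻¹.toNNReal, hfxlip.lipschitzOnWith⟩ hfxa
      rw [hRHS] at hkey
      have hchain : lam * (B x ^ 2 * T x) ≤ B x :=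
        le_trans (mul_le_mul_of_nonneg_left hLHS hlam.1.1) hkey
      rw [le_div_iff₀ hlam_pos]
      have hBx := hB_pos x hax
      have h2 : (φ x * lam) * B x ≤ 1 * B x := by
        simp only [hφdef]
        nlinarith [hchain]
      exact le_of_mul_le_mul_right h2 hBx
  · -- 1/lam ≤ 4A
    have h4A : (0:ℝ) < 4 * A := by positivity
    have := one_div_le_one_div_of_le (one_div_pos.2 (by linarith) : (0:ℝ) < 1 / (4 * A)) hlam_mem
    rwa [one_div_one_div] at this
end

section
/- For every a ∈ (0,1], the function t ↦ sin(t)/sin(a·t) is non-increasing on (0, π). Equivalently, the function x ↦ log(sin(exp(x))) is concave on (−∞, log π). -/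
open MeasureTheory Filter

lemma psi_hasDeriv (a t : ℝ) :
    HasDerivAt (fun t => Real.sin (a*t) * Real.cos t - a * (Real.cos (a*t) * Real.sin t))
      ((Real.cos (a*t) * a) * Real.cos t + Real.sin (a*t) * (-Real.sin t)
        - a * ((-Real.sin (a*t) * a) * Real.sin t + Real.cos (a*t) * Real.cos t)) t := by
  have hlin : HasDerivAt (fun x : ℝ => a * x) a t := by
    simpa using (hasDerivAt_id t).const_mul a
  have hs : HasDerivAt (fun x => Real.sin (a*x)) (Real.cos (a*t) * a) t :=
    (Real.hasDerivAt_sin (a*t)).comp t hlin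
  have hc : HasDerivAt (fun x => Real.cos (a*x)) (-Real.sin (a*t) * a) t :=
    (Real.hasDerivAt_cos (a*t)).comp t hlin
  exact (hs.mul (Real.hasDerivAt_cos t)).sub
    ((hc.mul (Real.hasDerivAt_sin t)).const_mul a)

lemma psi_nonpos {a : ℝ} (ha : 0 < a) (ha1 : a ≤ 1) {t : ℝ} (ht : t ∈ Set.Icc 0 Real.pi) :
    Real.sin (a*t) * Real.cos t - a * (Real.cos (a*t) * Real.sin t) ≤ 0 := by
  set ψ : ℝ → ℝ := fun t => Real.sin (a*t) * Real.cos t - a * (Real.cos (a*t) * Real.sin t) with hψ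
  have hanti : AntitoneOn ψ (Set.Icc 0 Real.pi) := by
    apply antitoneOn_of_deriv_nonpos (convex_Icc _ _)
    · exact fun x _ => ((psi_hasDeriv a x).continuousAt).continuousWithinAt
    · exact fun x _ => ((psi_hasDeriv a x).differentiableAt).differentiableWithinAt
    · intro x hx
      rw [interior_Icc] at hx
      obtain ⟨hx1, hx2⟩ := hx
      rw [(psi_hasDeriv a x).deriv]
      have hsx : 0 ≤ Real.sin x := Real.sin_nonneg_of_nonneg_of_le_pi hx1.le hx2.le
      have hax : 0 ≤ Real.sin (a*x) := by
        apply Real.sin_nonneg_of_nonneg_of_le_pi (by positivity)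
        nlinarith
      have ha2 : a^2 ≤ 1 := by nlinarith
      nlinarith [mul_nonneg hax hsx]
  have h0 : ψ 0 = 0 := by simp [hψ]
  have h1 := hanti (Set.left_mem_Icc.2 Real.pi_pos.le) ht ht.1
  show ψ t ≤ 0
  linarith [h0.le, h0.ge]


/-- For `a ∈ (0,1]`, `t ↦ sin t / sin (a t)` is non-increasing on `(0,π)`; equivalently,
`x ↦ log (sin (exp x))` is concave on `(-∞, log π)`. -/
theorem stmt_19 :
    (∀ a ∈ Set.Ioc (0:ℝ) 1,
      AntitoneOn (fun t => Real.sin t / Real.sin (a * t)) (Set.Ioo 0 Real.pi)) ∧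
    ConcaveOn ℝ (Set.Iio (Real.log Real.pi))
      (fun x => Real.log (Real.sin (Real.exp x))) := by
  constructor
  · rintro a ⟨ha, ha1⟩
    have key : ∀ t ∈ Set.Ioo 0 Real.pi,
        HasDerivAt (fun t => Real.sin t / Real.sin (a * t))
          ((Real.cos t * Real.sin (a*t) - Real.sin t * (Real.cos (a*t) * a)) / (Real.sin (a*t))^2)
          t := by
      intro t ht
      obtain ⟨ht1, ht2⟩ := ht
      have hat : 0 < Real.sin (a*t) := by
        apply Real.sin_pos_of_pos_of_lt_pi (by positivity)
        nlinarith
      have hlin : HasDerivAt (fun x : ℝ => a * x) a t := by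
        simpa using (hasDerivAt_id t).const_mul a
      have hs : HasDerivAt (fun x => Real.sin (a*x)) (Real.cos (a*t) * a) t :=
        (Real.hasDerivAt_sin (a*t)).comp t hlin
      exact (Real.hasDerivAt_sin t).div hs hat.ne'
    apply antitoneOn_of_deriv_nonpos (convex_Ioo _ _)
    · exact fun x hx => ((key x hx).continuousAt).continuousWithinAt
    · rw [interior_Ioo]
      exact fun x hx => ((key x hx).differentiableAt).differentiableWithinAt
    · intro x hx
      rw [interior_Ioo] at hx
      rw [(key x hx).deriv]
      apply div_nonpos_of_nonpos_of_nonneg _ (sq_nonneg _)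
      have := psi_nonpos ha ha1 (t := x) ⟨hx.1.le, hx.2.le⟩
      nlinarith
  · have hpi : (0:ℝ) < Real.pi := Real.pi_pos
    set S := Set.Iio (Real.log Real.pi) with hS
    have hint : interior S = S := by simp [hS]
    have hmem : ∀ x ∈ S, 0 < Real.sin (Real.exp x) := by
      intro x hx
      apply Real.sin_pos_of_pos_of_lt_pi (Real.exp_pos x)
      calc Real.exp x < Real.exp (Real.log Real.pi) := Real.exp_lt_exp.2 hx
      _ = Real.pi := Real.exp_log hpi
    set f' : ℝ → ℝ := fun x => Real.exp x * Real.cos (Real.exp x) / Real.sin (Real.exp x) with hf'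
    set f'' : ℝ → ℝ := fun x =>
      Real.exp x * (Real.sin (Real.exp x) * Real.cos (Real.exp x) - Real.exp x)
        / (Real.sin (Real.exp x))^2 with hf''
    have hd1 : ∀ x ∈ S, HasDerivAt (fun x => Real.log (Real.sin (Real.exp x))) (f' x) x := by
      intro x hx
      have he := Real.hasDerivAt_exp x
      have hs : HasDerivAt (fun x => Real.sin (Real.exp x))
          (Real.cos (Real.exp x) * Real.exp x) x :=
        (Real.hasDerivAt_sin (Real.exp x)).comp x he
      have := (Real.hasDerivAt_log (hmem x hx).ne').comp x hs
      refine (this.congr_deriv ?_ :)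
      field_simp [hf']
      ring
    have hd2 : ∀ x ∈ S, HasDerivAt f' (f'' x) x := by
      intro x hx
      have he := Real.hasDerivAt_exp x
      set u := Real.exp x with hu
      have hsu := hmem x hx
      have hs : HasDerivAt (fun x => Real.sin (Real.exp x)) (Real.cos u * u) x :=
        (Real.hasDerivAt_sin u).comp (h := Real.exp) x he
      have hc : HasDerivAt (fun x => Real.cos (Real.exp x)) (-Real.sin u * u) x :=
        (Real.hasDerivAt_cos u).comp (h := Real.exp) x he
      have hN : HasDerivAt (fun x => Real.exp x * Real.cos (Real.exp x))
          (Real.exp x * Real.cos u + Real.exp x * (-Real.sin u * u)) x := he.mul hc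
      have := hN.div hs hsu.ne'
      refine (this.congr_deriv ?_ :)
      have hpyth := Real.sin_sq_add_cos_sq u
      simp only [hf'', hu] at hpyth ⊢
      field_simp
      ring_nf
      linear_combination (-Real.exp x) * hpyth
    have h0 : ∀ x ∈ S, f'' x ≤ 0 := by
      intro x hx
      have hsu := hmem x hx
      apply div_nonpos_of_nonpos_of_nonneg _ (sq_nonneg _)
      have h1 : Real.sin (Real.exp x) * Real.cos (Real.exp x) ≤ Real.exp x := by
        have := Real.sin_le (by positivity : (0:ℝ) ≤ 2 * Real.exp x)
        rw [Real.sin_two_mul] at this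
        linarith
      nlinarith [Real.exp_pos x]
    exact concaveOn_of_hasDerivWithinAt2_nonpos (convex_Iio _)
      (fun x hx => (hd1 x hx).continuousAt.continuousWithinAt)
      (fun x hx => ((hd1 x (hint ▸ hx)).hasDerivWithinAt))
      (fun x hx => ((hd2 x (hint ▸ hx)).hasDerivWithinAt))
      (fun x hx => h0 x (hint ▸ hx))
end
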